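/- If f : (0,∞) → (0,∞) is twice differentiable, strictly positive, with f'(R) > 0, and satisfies R·f''(R)·f(R) = R·f'(R)² − f'(R)·f(R) for all R > 0, then f(R) = C₁·R^n for some constants C₁ > 0 and n ∈ ℝ. -/

import Mathlib

/-- A function with vanishing derivative on `(0,∞)` is constant there. -/
lemma const_on_Ioi (g : ℝ → ℝ) (hg : ∀ x > 0, DifferentiableAt ℝ g x)
    (hg' : ∀ x > 0, deriv g x = 0) : ∀ x > 0, g x = g 1 := by
  have key : ∀ a b : ℝ, 0 < a → a ≤ b → g b = g a := by
    intro a b ha hab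
    have hdo : DifferentiableOn ℝ g (Set.Icc a b) := fun x hx =>
      (hg x (lt_of_lt_of_le ha hx.1)).differentiableWithinAt
    have := constant_of_derivWithin_zero hdo ?_ b (Set.right_mem_Icc.2 hab)
    · exact this
    · intro x hx
      have hab' : a < b := lt_of_le_of_lt hx.1 hx.2
      have hx0 : 0 < x := lt_of_lt_of_le ha hx.1
      rw [(hg x hx0).derivWithin ((uniqueDiffOn_Icc hab') x (Set.Ico_subset_Icc_self hx))]
      exact hg' x hx0
  intro x hx
  rcases le_total x 1 with h | h
  · exact (key x 1 hx h).symm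
  · exact key 1 x one_pos h

/-- If `f : (0,∞) → (0,∞)` is twice differentiable, strictly positive, with `f' > 0`,
and satisfies `R * f'' * f = R * (f')^2 - f' * f` on `(0,∞)`, then `f R = C₁ * R ^ n`. -/
theorem stmt_3 (f : ℝ → ℝ)
    (hpos : ∀ R > 0, 0 < f R)
    (hderivpos : ∀ R > 0, 0 < deriv f R)
    (hdiff : ∀ R > 0, DifferentiableAt ℝ f R)
    (hdiff2 : ∀ R > 0, DifferentiableAt ℝ (deriv f) R)
    (hode : ∀ R > 0, R * deriv (deriv f) R * f R = R * (deriv f R) ^ 2 - deriv f R * f R) :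
    ∃ C₁ > 0, ∃ n : ℝ, ∀ R > 0, f R = C₁ * R ^ n := by
  set H : ℝ → ℝ := fun R => R * deriv f R / f R with hH
  set n : ℝ := H 1 with hn
  -- derivative of H
  have hHderiv : ∀ R > 0, HasDerivAt H 0 R := by
    intro R hR
    have hfne : f R ≠ 0 := (hpos R hR).ne'
    have h1 : HasDerivAt (fun R => R * deriv f R)
        (1 * deriv f R + R * deriv (deriv f) R) R :=
      (hasDerivAt_id R).mul (hdiff2 R hR).hasDerivAt
    have h2 := h1.div (hdiff R hR).hasDerivAt hfne
    convert h2 using 1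
    · rfl
    · rfl
    · rfl
    have := hode R hR
    field_simp
    ring_nf
    nlinarith [this]
  have hHdiff : ∀ R > 0, DifferentiableAt ℝ H R := fun R hR =>
    (hHderiv R hR).differentiableAt
  have hHd0 : ∀ R > 0, deriv H R = 0 := fun R hR => (hHderiv R hR).deriv
  have hHconst : ∀ R > 0, H R = n := fun R hR => const_on_Ioi H hHdiff hHd0 R hR
  -- so R * f' = n * f on (0,∞)
  have hkey : ∀ R > 0, R * deriv f R = n * f R := by
    intro R hR
    have := hHconst R hR
    have hfne : f R ≠ 0 := (hpos R hR).ne'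
    simp only [hH] at this
    field_simp at this
    linarith [this]
  -- now G R = f R / R^n is constant
  set G : ℝ → ℝ := fun R => f R / R ^ n with hG
  have hGderiv : ∀ R > 0, HasDerivAt G 0 R := by
    intro R hR
    have hRne : R ≠ 0 := hR.ne'
    have hrpow : HasDerivAt (fun x : ℝ => x ^ n) (n * R ^ (n - 1)) R :=
      Real.hasDerivAt_rpow_const (Or.inl hRne)
    have hrne : R ^ n ≠ 0 := (Real.rpow_pos_of_pos hR n).ne'
    have h2 := (hdiff R hR).hasDerivAt.div hrpow hrne
    convert h2 using 1
    · rfl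
    · rfl
    · rfl
    have hkey' := hkey R hR
    have hsplit : R ^ n = R ^ (n - 1) * R := by
      rw [← Real.rpow_add_one hRne]; ring_nf
    rw [eq_comm, div_eq_zero_iff]
    left
    calc deriv f R * R ^ n - f R * (n * R ^ (n - 1))
        = (R * deriv f R - n * f R) * R ^ (n - 1) := by rw [hsplit]; ring
      _ = 0 := by rw [hkey']; ring
  have hGdiff : ∀ R > 0, DifferentiableAt ℝ G R := fun R hR =>
    (hGderiv R hR).differentiableAt
  have hGd0 : ∀ R > 0, deriv G R = 0 := fun R hR => (hGderiv R hR).deriv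
  have hGconst : ∀ R > 0, G R = G 1 := const_on_Ioi G hGdiff hGd0
  refine ⟨f 1, hpos 1 one_pos, n, fun R hR => ?_⟩
  have := hGconst R hR
  simp only [hG, Real.one_rpow, div_one] at this
  have hrne : (R : ℝ) ^ n ≠ 0 := (Real.rpow_pos_of_pos hR n).ne'
  field_simp at this
  linarith [this]
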